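/- arXiv:2505.19378 — 3 statements merged into one kernel-verified Lean document; each statement's English description precedes it below -/
import Mathlib

section
/- Let ε ∈ (0,1], p ∈ [1,∞), ψ ∈ [0,1), and Z a standard scalar Gaussian. Then there is a constant C_p (depending only on p) such that E|⌊ψ + εZ⌋|^p ≤ C_p (exp(−min(ψ, 1−ψ)²/(2ε²)) + ε^p). -/
open MeasureTheory Real ProbabilityTheory


lemma gr_eq : gaussianReal 0 1 =
    volume.withDensity fun z => ((gaussianPDFReal 0 1 z).toNNReal : ENNReal) := by
  rw [gaussianReal_of_var_ne_zero 0 one_ne_zero]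
  rfl

lemma pdf_exp_identity (t z : ℝ) :
    gaussianPDFReal 0 1 z * Real.exp (t * z)
      = Real.exp (t ^ 2 / 2) * gaussianPDFReal t 1 z := by
  simp only [gaussianPDFReal, NNReal.coe_one, mul_one, sub_zero]
  rw [mul_assoc, mul_comm (Real.exp (t ^ 2 / 2)), mul_assoc, ← Real.exp_add, ← Real.exp_add]
  ring_nf

lemma meas_pdf : Measurable fun z => (gaussianPDFReal 0 1 z).toNNReal :=
  (measurable_gaussianPDFReal 0 1).real_toNNReal

lemma integrable_exp_gauss (t : ℝ) :
    Integrable (fun z => Real.exp (t * z)) (gaussianReal 0 1) := by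
  rw [gr_eq, integrable_withDensity_iff_integrable_smul meas_pdf]
  have : (fun z => (gaussianPDFReal 0 1 z).toNNReal • Real.exp (t * z))
      = fun z => Real.exp (t ^ 2 / 2) * gaussianPDFReal t 1 z := by
    ext z
    rw [NNReal.smul_def, smul_eq_mul, Real.coe_toNNReal _ (gaussianPDFReal_nonneg 0 1 z),
      pdf_exp_identity]
  rw [this]
  exact (integrable_gaussianPDFReal t 1).const_mul _

lemma integral_exp_gauss (t : ℝ) :
    ∫ z, Real.exp (t * z) ∂(gaussianReal 0 1) = Real.exp (t ^ 2 / 2) := by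
  rw [gr_eq, integral_withDensity_eq_integral_smul meas_pdf]
  have : (fun z => (gaussianPDFReal 0 1 z).toNNReal • Real.exp (t * z))
      = fun z => Real.exp (t ^ 2 / 2) * gaussianPDFReal t 1 z := by
    ext z
    rw [NNReal.smul_def, smul_eq_mul, Real.coe_toNNReal _ (gaussianPDFReal_nonneg 0 1 z),
      pdf_exp_identity]
  rw [this, integral_const_mul, integral_gaussianPDFReal_eq_one t one_ne_zero, mul_one]

lemma gauss_tail {a : ℝ} (ha : 0 ≤ a) :
    ((gaussianReal 0 1) {z | a ≤ |z|}).toReal ≤ 2 * Real.exp (-a ^ 2 / 2) := by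
  set ν := gaussianReal 0 1
  have hsub : {z : ℝ | a ≤ |z|} ⊆ {z : ℝ | a ≤ z} ∪ {z : ℝ | a ≤ -z} := by
    intro z hz
    simp only [Set.mem_setOf_eq] at hz
    rcases le_or_gt 0 z with h | h
    · left; rw [Set.mem_setOf_eq]; rwa [abs_of_nonneg h] at hz
    · right; rw [Set.mem_setOf_eq]; rwa [abs_of_neg h] at hz
  have h1 : (ν {z : ℝ | a ≤ z}).toReal ≤ Real.exp (-a ^ 2 / 2) := by
    have := measure_ge_le_exp_mul_mgf (X := id) (μ := ν) (t := a) a ha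
      (by simpa using integrable_exp_gauss a)
    rw [mgf] at this
    simp only [id] at this
    calc (ν {z : ℝ | a ≤ z}).toReal ≤ Real.exp (-a * a) * ∫ z, Real.exp (a * z) ∂ν := this
      _ = Real.exp (-a ^ 2 / 2) := by
          rw [integral_exp_gauss, ← Real.exp_add]; ring_nf
  have h2 : (ν {z : ℝ | a ≤ -z}).toReal ≤ Real.exp (-a ^ 2 / 2) := by
    have hint : Integrable (fun z : ℝ => Real.exp (a * -z)) ν := by
      have he : (fun z : ℝ => Real.exp (a * -z)) = fun z => Real.exp ((-a) * z) := by
        ext z; ring_nf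
      rw [he]; exact integrable_exp_gauss (-a)
    have := measure_ge_le_exp_mul_mgf (X := fun z : ℝ => -z) (μ := ν) (t := a) a ha hint
    rw [mgf] at this
    calc (ν {z : ℝ | a ≤ -z}).toReal ≤ Real.exp (-a * a) * ∫ z, Real.exp (a * -z) ∂ν := this
      _ = Real.exp (-a ^ 2 / 2) := by
          have : (fun z : ℝ => Real.exp (a * -z)) = fun z => Real.exp ((-a) * z) := by
            ext z; ring_nf
          rw [this, integral_exp_gauss, ← Real.exp_add]; ring_nf
  calc ((ν) {z : ℝ | a ≤ |z|}).toReal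
      ≤ (ν ({z : ℝ | a ≤ z} ∪ {z : ℝ | a ≤ -z})).toReal := by
        exact ENNReal.toReal_mono (measure_ne_top _ _) (measure_mono hsub)
    _ ≤ (ν {z : ℝ | a ≤ z} + ν {z : ℝ | a ≤ -z}).toReal := by
        exact ENNReal.toReal_mono (by finiteness) (measure_union_le _ _)
    _ = (ν {z : ℝ | a ≤ z}).toReal + (ν {z : ℝ | a ≤ -z}).toReal :=
        ENNReal.toReal_add (measure_ne_top _ _) (measure_ne_top _ _)
    _ ≤ 2 * Real.exp (-a ^ 2 / 2) := by linarith

lemma abs_rpow_le_exp {p : ℝ} (hp : 1 ≤ p) (z : ℝ) :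
    |z| ^ p ≤ Real.exp (p * z) + Real.exp (-p * z) := by
  have hp0 : (0:ℝ) ≤ p := by linarith
  have key : |z| ^ p ≤ Real.exp (p * |z|) := by
    rcases le_or_gt |z| 1 with h | h
    · exact (Real.rpow_le_one (abs_nonneg z) h hp0).trans
        (Real.one_le_exp (by positivity))
    · rw [Real.rpow_def_of_pos (by linarith)]
      apply Real.exp_le_exp.mpr
      rw [mul_comm]
      exact mul_le_mul_of_nonneg_left ((Real.log_le_sub_one_of_pos (by linarith)).trans
        (by linarith)) hp0
  rcases le_or_gt 0 z with h | h
  · calc |z| ^ p ≤ Real.exp (p * |z|) := key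
      _ = Real.exp (p * z) := by rw [abs_of_nonneg h]
      _ ≤ _ := le_add_of_nonneg_right (Real.exp_pos _).le
  · calc |z| ^ p ≤ Real.exp (p * |z|) := key
      _ = Real.exp (-p * z) := by rw [abs_of_neg h]; ring_nf
      _ ≤ _ := le_add_of_nonneg_left (Real.exp_pos _).le

lemma integrable_abs_rpow_gauss {p : ℝ} (hp : 1 ≤ p) :
    Integrable (fun z => |z| ^ p) (gaussianReal 0 1) := by
  have hi2 : Integrable (fun z : ℝ => Real.exp (-p * z)) (gaussianReal 0 1) := by
    have he : (fun z : ℝ => Real.exp (-p * z)) = fun z => Real.exp ((-p) * z) := rfl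
    rw [he]; exact integrable_exp_gauss (-p)
  refine Integrable.mono (g := fun z => Real.exp (p * z) + Real.exp (-p * z))
    ((integrable_exp_gauss p).add hi2)
    ((continuous_abs.rpow_const fun x => Or.inr (by linarith)).measurable.aestronglyMeasurable)
    (ae_of_all _ fun z => ?_)
  have h1 : ‖|z| ^ p‖ = |z| ^ p := Real.norm_of_nonneg (Real.rpow_nonneg (abs_nonneg z) p)
  have h2 : ‖Real.exp (p * z) + Real.exp (-p * z)‖ = Real.exp (p * z) + Real.exp (-p * z) :=
    Real.norm_of_nonneg (by positivity)
  rw [h1, h2]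
  exact abs_rpow_le_exp hp z

theorem stmt5 (p : ℝ) (hp : 1 ≤ p) :
    ∃ C : ℝ, 0 < C ∧
      ∀ ε : ℝ, ε ∈ Set.Ioc (0 : ℝ) 1 →
      ∀ ψ : ℝ, ψ ∈ Set.Ico (0 : ℝ) 1 →
        ∫ z : ℝ, |(⌊ψ + ε * z⌋ : ℝ)| ^ p ∂(gaussianReal 0 1) ≤
          C * (Real.exp (-(min ψ (1 - ψ)) ^ 2 / (2 * ε ^ 2)) + ε ^ p) := by
  set ν := gaussianReal 0 1 with hν
  have hp0 : (0:ℝ) < p := by linarith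
  set Ip := ∫ z, |z| ^ p ∂ν with hIp
  have hIp0 : 0 ≤ Ip := integral_nonneg fun z => Real.rpow_nonneg (abs_nonneg z) p
  have h4p : (0:ℝ) < 4 ^ p := Real.rpow_pos_of_pos (by norm_num) p
  have h2p : (0:ℝ) < 2 ^ p := Real.rpow_pos_of_pos (by norm_num) p
  refine ⟨2 * 4 ^ p + 2 ^ p * Ip + 1, by positivity, ?_⟩
  rintro ε ⟨hε0, hε1⟩ ψ ⟨hψ0, hψ1⟩
  set m := min ψ (1 - ψ) with hm
  have hm0 : 0 ≤ m := le_min hψ0 (by linarith)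
  have hmψ : m ≤ ψ := min_le_left _ _
  have hmψ' : m ≤ 1 - ψ := min_le_right _ _
  set S : Set ℝ := {z | m ≤ ε * |z|} with hS
  have hSm : MeasurableSet S :=
    (isClosed_le continuous_const (continuous_const.mul continuous_abs)).measurableSet
  have hεp0 : (0:ℝ) ≤ ε ^ p := Real.rpow_nonneg hε0.le p
  -- pointwise bound
  have hpt : ∀ z : ℝ, |(⌊ψ + ε * z⌋ : ℝ)| ^ p ≤
      S.indicator (fun _ => (4:ℝ) ^ p) z + 2 ^ p * ε ^ p * |z| ^ p := by
    intro z
    have hza : -|z| ≤ z := neg_abs_le z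
    have hzb : z ≤ |z| := le_abs_self z
    have hz1 : ε * z ≤ ε * |z| := mul_le_mul_of_nonneg_left hzb hε0.le
    have hz2 : -(ε * |z|) ≤ ε * z := by nlinarith
    by_cases hz : z ∈ S
    · rw [Set.indicator_of_mem hz]
      have h1 : |(⌊ψ + ε * z⌋ : ℝ)| ≤ 2 + ε * |z| := by
        have hf1 : (⌊ψ + ε * z⌋ : ℝ) ≤ ψ + ε * z := Int.floor_le _
        have hf2 : ψ + ε * z - 1 < ⌊ψ + ε * z⌋ := Int.sub_one_lt_floor _
        rw [abs_le]
        constructor <;> nlinarith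
      have hmax1 : (2:ℝ) ≤ max 2 (ε * |z|) := le_max_left _ _
      have hmax2 : ε * |z| ≤ max 2 (ε * |z|) := le_max_right _ _
      calc |(⌊ψ + ε * z⌋ : ℝ)| ^ p ≤ (2 + ε * |z|) ^ p :=
            Real.rpow_le_rpow (abs_nonneg _) h1 hp0.le
        _ ≤ (2 * max 2 (ε * |z|)) ^ p :=
            Real.rpow_le_rpow (by positivity) (by nlinarith) hp0.le
        _ = 2 ^ p * max 2 (ε * |z|) ^ p :=
            Real.mul_rpow (by norm_num) (by positivity)
        _ ≤ 2 ^ p * (2 ^ p + (ε * |z|) ^ p) := by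
            refine mul_le_mul_of_nonneg_left ?_ h2p.le
            rcases le_total (ε * |z|) 2 with h | h
            · rw [max_eq_left h]
              exact le_add_of_nonneg_right (Real.rpow_nonneg (by positivity) p)
            · rw [max_eq_right h]
              exact le_add_of_nonneg_left h2p.le
        _ = 4 ^ p + 2 ^ p * ε ^ p * |z| ^ p := by
            rw [mul_add, ← Real.mul_rpow (by norm_num) (by norm_num),
              Real.mul_rpow hε0.le (abs_nonneg z)]
            norm_num; ring
    · have hzS : ε * |z| < m := by
        rw [hS, Set.mem_setOf_eq, not_le] at hz; exact hz
      have hfl : ⌊ψ + ε * z⌋ = 0 := by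
        rw [Int.floor_eq_zero_iff]
        constructor
        · show (0:ℝ) ≤ ψ + ε * z
          nlinarith
        · show ψ + ε * z < 1
          nlinarith
      rw [hfl]
      simp only [Int.cast_zero, abs_zero]
      rw [Real.zero_rpow hp0.ne']
      have : (0:ℝ) ≤ S.indicator (fun _ => (4:ℝ) ^ p) z :=
        Set.indicator_nonneg (fun _ _ => h4p.le) z
      positivity
  -- integrability of the majorant
  have hgi1 : Integrable (fun z => S.indicator (fun _ => (4:ℝ) ^ p) z) ν :=
    (integrable_const _).indicator hSm
  have hgi2 : Integrable (fun z : ℝ => 2 ^ p * ε ^ p * |z| ^ p) ν :=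
    (integrable_abs_rpow_gauss hp).const_mul _
  have hmono : ∫ z, |(⌊ψ + ε * z⌋ : ℝ)| ^ p ∂ν ≤
      ∫ z, (S.indicator (fun _ => (4:ℝ) ^ p) z + 2 ^ p * ε ^ p * |z| ^ p) ∂ν :=
    integral_mono_of_nonneg (ae_of_all _ fun z => Real.rpow_nonneg (abs_nonneg _) p)
      (hgi1.add hgi2) (ae_of_all _ hpt)
  have hgval : ∫ z, (S.indicator (fun _ => (4:ℝ) ^ p) z + 2 ^ p * ε ^ p * |z| ^ p) ∂ν
      = (ν S).toReal * 4 ^ p + 2 ^ p * ε ^ p * Ip := by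
    rw [integral_add hgi1 hgi2, integral_indicator_const _ hSm, integral_const_mul, smul_eq_mul]
    rfl
  have htail : (ν S).toReal ≤ 2 * Real.exp (-m ^ 2 / (2 * ε ^ 2)) := by
    have hSeq : S = {z | m / ε ≤ |z|} := by
      ext z
      rw [hS, Set.mem_setOf_eq, Set.mem_setOf_eq, div_le_iff₀ hε0, mul_comm]
    have h := gauss_tail (a := m / ε) (by positivity)
    rw [hSeq]
    have harg : -(m / ε) ^ 2 / 2 = -m ^ 2 / (2 * ε ^ 2) := by
      rw [div_pow]; ring
    rwa [harg] at h
  have hexp0 : (0:ℝ) < Real.exp (-m ^ 2 / (2 * ε ^ 2)) := Real.exp_pos _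
  calc ∫ z, |(⌊ψ + ε * z⌋ : ℝ)| ^ p ∂ν
      ≤ (ν S).toReal * 4 ^ p + 2 ^ p * ε ^ p * Ip := hmono.trans hgval.le
    _ ≤ (2 * Real.exp (-m ^ 2 / (2 * ε ^ 2))) * 4 ^ p + 2 ^ p * ε ^ p * Ip := by
        have := mul_le_mul_of_nonneg_right htail h4p.le
        linarith
    _ ≤ (2 * 4 ^ p + 2 ^ p * Ip + 1) * (Real.exp (-m ^ 2 / (2 * ε ^ 2)) + ε ^ p) := by
        nlinarith [mul_nonneg hεp0 h4p.le, mul_nonneg (mul_nonneg h2p.le hIp0) hexp0.le,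
          mul_nonneg h2p.le hIp0]
end

section
/- Let ε ∈ (0,1], p ∈ [1,∞), and Z a standard scalar Gaussian independent of a random variable ψ uniformly distributed on [0,1). Then there is a constant C_p such that E|⌊ψ + εZ⌋|^p ≤ C_p ε. -/
set_option maxHeartbeats 1000000


open MeasureTheory Real ProbabilityTheory

lemma abs_floor_le_real (x : ℝ) : |(⌊x⌋ : ℝ)| ≤ |x| + 1 := by
  rw [abs_le]
  constructor
  · have h1 := Int.sub_one_lt_floor x
    have : -|x| ≤ x := neg_abs_le x
    linarith
  · have := Int.floor_le x
    have : x ≤ |x| := le_abs_self x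
    linarith

theorem stmt6 (p : ℝ) (hp : 1 ≤ p) :
    ∃ C : ℝ, 0 < C ∧
      ∀ ε : ℝ, ε ∈ Set.Ioc (0 : ℝ) 1 →
        ∫ w : ℝ × ℝ, |(⌊w.1 + ε * w.2⌋ : ℝ)| ^ p
            ∂((volume.restrict (Set.Ico (0 : ℝ) 1)).prod (gaussianReal 0 1)) ≤ C * ε := by
  set t : ℝ := p + 1 with ht
  set J : ℝ := ∫ x : ℝ, Real.exp (-(1/4) * x ^ 2) with hJ
  have hJ0 : 0 ≤ J := integral_nonneg fun x => (Real.exp_pos _).le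
  set K : ℝ := (2 : ℝ) ^ (p + 2) * Real.exp (t ^ 2) with hK
  have hK0 : 0 ≤ K := by positivity
  refine ⟨K * J + 1, by positivity, ?_⟩
  intro ε hε
  obtain ⟨hε0, hε1⟩ := hε
  -- measurability
  have hmeas : Measurable fun w : ℝ × ℝ => |(⌊w.1 + ε * w.2⌋ : ℝ)| ^ p := by
    have h1 : Measurable fun w : ℝ × ℝ => w.1 + ε * w.2 :=
      measurable_fst.add (measurable_snd.const_mul ε)
    have h2 : Measurable fun w : ℝ × ℝ => ((⌊w.1 + ε * w.2⌋ : ℤ) : ℝ) :=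
      measurable_from_top.comp h1.floor
    exact (Real.continuous_rpow_const (by linarith : (0:ℝ) ≤ p)).measurable.comp h2.abs
  have hnn : ∀ w : ℝ × ℝ, 0 ≤ |(⌊w.1 + ε * w.2⌋ : ℝ)| ^ p := fun w =>
    Real.rpow_nonneg (abs_nonneg _) p
  rw [MeasureTheory.integral_eq_lintegral_of_nonneg_ae (Filter.Eventually.of_forall hnn)
    hmeas.aestronglyMeasurable]
  have hCε : 0 ≤ (K * J + 1) * ε := by positivity
  refine ENNReal.toReal_le_of_le_ofReal hCε ?_
  -- swap the order of integration
  rw [MeasureTheory.lintegral_prod_symm _ (hmeas.ennreal_ofReal.aemeasurable)]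
  -- inner bound for each z
  have inner : ∀ z : ℝ,
      (∫⁻ ψ in Set.Ico (0:ℝ) 1, ENNReal.ofReal (|(⌊ψ + ε * z⌋ : ℝ)| ^ p) ∂volume)
        ≤ ENNReal.ofReal ε * ENNReal.ofReal ((2:ℝ) ^ (p + 2) * Real.exp (t * |z|)) := by
    intro z
    set a : ℝ := ε * |z| with ha
    have ha0 : 0 ≤ a := by positivity
    set A : Set ℝ := Set.Iio a ∪ Set.Ici (1 - a) with hA
    have hAm : MeasurableSet A := (measurableSet_Iio).union measurableSet_Ici
    have step1 : (∫⁻ ψ in Set.Ico (0:ℝ) 1, ENNReal.ofReal (|(⌊ψ + ε * z⌋ : ℝ)| ^ p) ∂volume)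
        ≤ ∫⁻ ψ in Set.Ico (0:ℝ) 1,
            A.indicator (fun _ => ENNReal.ofReal ((2 + |z|) ^ p)) ψ ∂volume := by
      refine setLIntegral_mono (measurable_const.indicator hAm) ?_
      intro ψ hψ
      obtain ⟨hψ0, hψ1⟩ := hψ
      by_cases hψA : ψ ∈ A
      · rw [Set.indicator_of_mem hψA]
        refine ENNReal.ofReal_le_ofReal ?_
        refine Real.rpow_le_rpow (abs_nonneg _) ?_ (by linarith)
        have h1 : |(⌊ψ + ε * z⌋ : ℝ)| ≤ |ψ + ε * z| + 1 := abs_floor_le_real _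
        have h2 : |ψ + ε * z| ≤ ψ + ε * |z| := by
          rw [abs_le]
          constructor
          · have : -(ε * |z|) ≤ ε * z := by
              have := neg_abs_le z
              nlinarith
            linarith
          · have : ε * z ≤ ε * |z| := by
              have := le_abs_self z
              nlinarith
            linarith
        have h3 : ε * |z| ≤ |z| := by nlinarith [abs_nonneg z]
        linarith
      · rw [Set.indicator_of_notMem hψA]
        have hψA' : a ≤ ψ ∧ ψ < 1 - a := by
          simp only [hA, Set.mem_union, Set.mem_Iio, Set.mem_Ici, not_or, not_lt, not_le] at hψA
          exact hψA
        have hfl : ⌊ψ + ε * z⌋ = 0 := by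
          rw [Int.floor_eq_zero_iff]
          have hl : -(ε * |z|) ≤ ε * z := by
            have := neg_abs_le z
            nlinarith
          have hu : ε * z ≤ ε * |z| := by
            have := le_abs_self z
            nlinarith
          simp only [ha] at hψA'
          simp only [Set.mem_Ico]
          constructor
          · linarith [hψA'.1]
          · linarith [hψA'.2]
        rw [hfl]
        simp only [Int.cast_zero, abs_zero]
        rw [Real.zero_rpow (by linarith)]
        simp
    have step2 : (∫⁻ ψ in Set.Ico (0:ℝ) 1,
            A.indicator (fun _ => ENNReal.ofReal ((2 + |z|) ^ p)) ψ ∂volume)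
        = ENNReal.ofReal ((2 + |z|) ^ p) * volume (A ∩ Set.Ico (0:ℝ) 1) := by
      rw [lintegral_indicator hAm, Measure.restrict_restrict hAm, setLIntegral_const]
    have step3 : volume (A ∩ Set.Ico (0:ℝ) 1) ≤ ENNReal.ofReal (2 * a) := by
      have hsub : A ∩ Set.Ico (0:ℝ) 1 ⊆ Set.Ico (0:ℝ) a ∪ Set.Ico (1 - a) 1 := by
        rintro x ⟨hxA, hx0, hx1⟩
        rcases hxA with h | h
        · exact Or.inl ⟨hx0, h⟩
        · exact Or.inr ⟨h, hx1⟩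
      calc volume (A ∩ Set.Ico (0:ℝ) 1) ≤ volume (Set.Ico (0:ℝ) a ∪ Set.Ico (1 - a) 1) :=
            measure_mono hsub
        _ ≤ volume (Set.Ico (0:ℝ) a) + volume (Set.Ico (1 - a) 1) := measure_union_le _ _
        _ = ENNReal.ofReal a + ENNReal.ofReal a := by
            rw [Real.volume_Ico, Real.volume_Ico]
            norm_num
        _ = ENNReal.ofReal (2 * a) := by
            rw [two_mul, ENNReal.ofReal_add ha0 ha0]
    have step4 : (2 + |z|) ^ p * (2 * a) ≤ ε * ((2:ℝ) ^ (p + 2) * Real.exp (t * |z|)) := by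
      have hz0 : (0:ℝ) ≤ |z| := abs_nonneg z
      have h2z : (0:ℝ) < 2 + |z| := by linarith
      have hb : 2 + |z| ≤ 2 * Real.exp |z| := by
        have := Real.add_one_le_exp |z|
        nlinarith [Real.exp_pos |z|]
      have hr1 : (2 + |z|) ^ p * (2 * |z|) ≤ 2 * (2 + |z|) ^ (p + 1) := by
        have hpow : (2 + |z|) ^ (p + 1) = (2 + |z|) ^ p * (2 + |z|) := by
          rw [Real.rpow_add h2z, Real.rpow_one]
        rw [hpow]
        have hpnn : (0:ℝ) ≤ (2 + |z|) ^ p := Real.rpow_nonneg h2z.le p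
        nlinarith [mul_le_mul_of_nonneg_left
          (show 2 * |z| ≤ 2 * (2 + |z|) by linarith) hpnn]
      have hr2 : (2 + |z|) ^ (p + 1) ≤ (2:ℝ) ^ (p + 1) * Real.exp ((p + 1) * |z|) := by
        calc (2 + |z|) ^ (p + 1) ≤ (2 * Real.exp |z|) ^ (p + 1) :=
              Real.rpow_le_rpow h2z.le hb (by linarith)
          _ = (2:ℝ) ^ (p + 1) * (Real.exp |z|) ^ (p + 1) :=
              Real.mul_rpow (by norm_num) (Real.exp_pos _).le
          _ = (2:ℝ) ^ (p + 1) * Real.exp (|z| * (p + 1)) := by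
              rw [Real.exp_mul]
          _ = (2:ℝ) ^ (p + 1) * Real.exp ((p + 1) * |z|) := by rw [mul_comm (p+1)]
      have h2pow : (2:ℝ) * (2:ℝ) ^ (p + 1) = (2:ℝ) ^ (p + 2) := by
        have e1 : (2:ℝ) ^ (p + 2) = (2:ℝ) ^ (p + 1) * (2:ℝ) ^ (1:ℝ) := by
          rw [← Real.rpow_add (by norm_num : (0:ℝ) < 2)]
          congr 1
          ring
        rw [e1, Real.rpow_one]
        ring
      have hpnn : (0:ℝ) ≤ (2 + |z|) ^ p := Real.rpow_nonneg h2z.le p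
      have key : (2 + |z|) ^ p * (2 * |z|) ≤ (2:ℝ) ^ (p + 2) * Real.exp (t * |z|) := by
        calc (2 + |z|) ^ p * (2 * |z|) ≤ 2 * (2 + |z|) ^ (p + 1) := hr1
          _ ≤ 2 * ((2:ℝ) ^ (p + 1) * Real.exp ((p + 1) * |z|)) := by
              nlinarith [hr2]
          _ = (2:ℝ) ^ (p + 2) * Real.exp (t * |z|) := by rw [← h2pow, ht]; ring
      calc (2 + |z|) ^ p * (2 * a) = ε * ((2 + |z|) ^ p * (2 * |z|)) := by rw [ha]; ring
        _ ≤ ε * ((2:ℝ) ^ (p + 2) * Real.exp (t * |z|)) := by nlinarith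
    calc (∫⁻ ψ in Set.Ico (0:ℝ) 1, ENNReal.ofReal (|(⌊ψ + ε * z⌋ : ℝ)| ^ p) ∂volume)
        ≤ ENNReal.ofReal ((2 + |z|) ^ p) * volume (A ∩ Set.Ico (0:ℝ) 1) := by
          rw [← step2]; exact step1
      _ ≤ ENNReal.ofReal ((2 + |z|) ^ p) * ENNReal.ofReal (2 * a) := by
          exact mul_le_mul_right step3 _
      _ = ENNReal.ofReal ((2 + |z|) ^ p * (2 * a)) := by
          rw [ENNReal.ofReal_mul (Real.rpow_nonneg (by positivity) p)]
      _ ≤ ENNReal.ofReal (ε * ((2:ℝ) ^ (p + 2) * Real.exp (t * |z|))) :=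
          ENNReal.ofReal_le_ofReal step4
      _ = ENNReal.ofReal ε * ENNReal.ofReal ((2:ℝ) ^ (p + 2) * Real.exp (t * |z|)) :=
          ENNReal.ofReal_mul hε0.le
  -- outer bound: gaussian integral of the exponential bound
  have outer : (∫⁻ z, ENNReal.ofReal ((2:ℝ) ^ (p + 2) * Real.exp (t * |z|)) ∂(gaussianReal 0 1))
      ≤ ENNReal.ofReal (K * J) := by
    rw [gaussianReal_of_var_ne_zero 0 one_ne_zero]
    have hg : Measurable fun z : ℝ => ENNReal.ofReal ((2:ℝ) ^ (p + 2) * Real.exp (t * |z|)) :=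
      ((measurable_const.mul ((measurable_abs.const_mul t).exp))).ennreal_ofReal
    rw [lintegral_withDensity_eq_lintegral_mul _ (measurable_gaussianPDF 0 1) hg]
    have hptw : ∀ x : ℝ, (gaussianPDF 0 1 * fun z : ℝ =>
        ENNReal.ofReal ((2:ℝ) ^ (p + 2) * Real.exp (t * |z|))) x
        ≤ ENNReal.ofReal (K * Real.exp (-(1/4) * x ^ 2)) := by
      intro x
      simp only [Pi.mul_apply]
      rw [gaussianPDF_def, ← ENNReal.ofReal_mul (gaussianPDFReal_nonneg 0 1 x)]
      refine ENNReal.ofReal_le_ofReal ?_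
      have hpdf : gaussianPDFReal 0 1 x ≤ Real.exp (-(x ^ 2) / 2) := by
        rw [gaussianPDFReal_def]
        simp only [NNReal.coe_one, mul_one, sub_zero]
        have h1 : (1:ℝ) ≤ Real.sqrt (2 * π) := by
          rw [show (1:ℝ) = Real.sqrt 1 by simp]
          exact Real.sqrt_le_sqrt (by nlinarith [Real.pi_gt_three])
        have h2 : (Real.sqrt (2 * π))⁻¹ ≤ 1 := by
          rw [inv_le_one_iff₀]; right; exact h1
        have h3 := (Real.exp_pos (-x ^ 2 / 2)).le
        nlinarith
      have hexp : Real.exp (-(x ^ 2) / 2) * Real.exp (t * |x|)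
          ≤ Real.exp (t ^ 2) * Real.exp (-(1/4) * x ^ 2) := by
        rw [← Real.exp_add, ← Real.exp_add]
        refine Real.exp_le_exp.mpr ?_
        nlinarith [sq_nonneg (t - |x| / 2), sq_abs x]
      calc gaussianPDFReal 0 1 x * ((2:ℝ) ^ (p + 2) * Real.exp (t * |x|))
          ≤ Real.exp (-(x ^ 2) / 2) * ((2:ℝ) ^ (p + 2) * Real.exp (t * |x|)) := by
            have : (0:ℝ) ≤ (2:ℝ) ^ (p + 2) * Real.exp (t * |x|) := by positivity
            nlinarith [gaussianPDFReal_nonneg 0 1 x]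
        _ = (2:ℝ) ^ (p + 2) * (Real.exp (-(x ^ 2) / 2) * Real.exp (t * |x|)) := by ring
        _ ≤ (2:ℝ) ^ (p + 2) * (Real.exp (t ^ 2) * Real.exp (-(1/4) * x ^ 2)) := by
            have h2p : (0:ℝ) ≤ (2:ℝ) ^ (p + 2) := by positivity
            nlinarith
        _ = K * Real.exp (-(1/4) * x ^ 2) := by rw [hK]; ring
    calc (∫⁻ x, (gaussianPDF 0 1 * fun z : ℝ =>
            ENNReal.ofReal ((2:ℝ) ^ (p + 2) * Real.exp (t * |z|))) x ∂volume)
        ≤ ∫⁻ x, ENNReal.ofReal (K * Real.exp (-(1/4) * x ^ 2)) ∂volume :=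
          lintegral_mono hptw
      _ = ENNReal.ofReal (∫ x, K * Real.exp (-(1/4) * x ^ 2)) := by
          rw [MeasureTheory.ofReal_integral_eq_lintegral_ofReal
            ((integrable_exp_neg_mul_sq (by norm_num : (0:ℝ) < 1/4)).const_mul K)
            (Filter.Eventually.of_forall fun x => by positivity)]
      _ = ENNReal.ofReal (K * J) := by
          rw [MeasureTheory.integral_const_mul, hJ]
  calc (∫⁻ z, ∫⁻ ψ in Set.Ico (0:ℝ) 1, ENNReal.ofReal (|(⌊ψ + ε * z⌋ : ℝ)| ^ p) ∂volume
          ∂(gaussianReal 0 1))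
      ≤ ∫⁻ z, ENNReal.ofReal ε * ENNReal.ofReal ((2:ℝ) ^ (p + 2) * Real.exp (t * |z|))
          ∂(gaussianReal 0 1) := lintegral_mono inner
    _ = ENNReal.ofReal ε * ∫⁻ z, ENNReal.ofReal ((2:ℝ) ^ (p + 2) * Real.exp (t * |z|))
          ∂(gaussianReal 0 1) := by
        rw [lintegral_const_mul (f := fun z : ℝ => ENNReal.ofReal ((2:ℝ) ^ (p + 2) * Real.exp (t * |z|))) _ (((measurable_const.mul
          ((measurable_abs.const_mul t).exp))).ennreal_ofReal)]
    _ ≤ ENNReal.ofReal ε * ENNReal.ofReal (K * J) := mul_le_mul_right outer _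
    _ = ENNReal.ofReal (ε * (K * J)) := (ENNReal.ofReal_mul hε0.le).symm
    _ ≤ ENNReal.ofReal ((K * J + 1) * ε) := ENNReal.ofReal_le_ofReal (by nlinarith)
end

section
/- Let f be a probability density on ℝ^d. Define g as follows. Fix an enumeration ℤ^d = {k₀ = 0, k₁, k₂, …}. For x ∈ [0,1)^d, let ℓ₀(x) = inf{ℓ ∈ ℕ : Σ_{j=0}^ℓ f(x + k_j) > 1}. If ℓ₀(x) = ∞, set g(x+k₀) = f(x+k₀) + 1 − Σ_{ℓ'} f(x+k_{ℓ'}) and g(x+k_ℓ) = f(x+k_ℓ) for ℓ > 0. If ℓ₀(x) < ∞, set g(x+k_ℓ) = f(x+k_ℓ) for ℓ < ℓ₀(x), g(x+k_{ℓ₀}) = 1 − Σ_{ℓ'<ℓ₀} f(x+k_{ℓ'}), and g(x+k_ℓ) = 0 for ℓ > ℓ₀(x). Then g is nonnegative, Σ_{k ∈ ℤ^d} g(x+k) = 1 for every x ∈ [0,1)^d, and g(x) ≤ f(x) for all x ∉ [0,1)^d. -/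
open MeasureTheory
open scoped Classical

/-- Embedding of `ℤ^d` in `ℝ^d`. -/
def latticeCoe {d : ℕ} (k : Fin d → ℤ) : Fin d → ℝ := fun i => (k i : ℝ)

/-- `ℓ₀(x) = inf {ℓ : Σ_{j=0}^ℓ f(x + k_j) > 1}` for the enumeration `e` of `ℤ^d`. -/
noncomputable def ell0 {d : ℕ} (e : ℕ ≃ (Fin d → ℤ)) (f : (Fin d → ℝ) → ℝ)
    (x : Fin d → ℝ) : ℕ :=
  sInf {ℓ : ℕ | 1 < ∑ j ∈ Finset.range (ℓ + 1), f (x + latticeCoe (e j))}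

/-- The truncated/redistributed density `g` built from `f` (writing `y = x + k_ℓ` with
`x ∈ [0,1)^d` and `ℓ` the index of the lattice cube containing `y`). -/
noncomputable def gConstr {d : ℕ} (e : ℕ ≃ (Fin d → ℤ)) (f : (Fin d → ℝ) → ℝ)
    (y : Fin d → ℝ) : ℝ :=
  let x : Fin d → ℝ := fun i => Int.fract (y i)
  let ℓ : ℕ := e.symm fun i => ⌊y i⌋
  if ({ℓ' : ℕ | 1 < ∑ j ∈ Finset.range (ℓ' + 1), f (x + latticeCoe (e j))}).Nonempty then
    -- case ℓ₀(x) < ∞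
    if ℓ < ell0 e f x then f y
    else if ℓ = ell0 e f x then
      1 - ∑ j ∈ Finset.range (ell0 e f x), f (x + latticeCoe (e j))
    else 0
  else
    -- case ℓ₀(x) = ∞
    if ℓ = 0 then f y + 1 - ∑' ℓ' : ℕ, f (x + latticeCoe (e ℓ'))
    else f y

lemma sum_range_ell0_le {d : ℕ} (e : ℕ ≃ (Fin d → ℤ)) (f : (Fin d → ℝ) → ℝ)
    (x : Fin d → ℝ) :
    ∑ j ∈ Finset.range (ell0 e f x), f (x + latticeCoe (e j)) ≤ 1 := by
  rcases Nat.eq_zero_or_pos (ell0 e f x) with h | h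
  · simp [h]
  · have h1 : ¬ (1 < ∑ j ∈ Finset.range (ell0 e f x - 1 + 1), f (x + latticeCoe (e j))) := by
      intro hcon
      have h2 : ell0 e f x ≤ ell0 e f x - 1 := Nat.sInf_le hcon
      omega
    rwa [Nat.sub_add_cancel h, not_lt] at h1

lemma gConstr_def {d : ℕ} (e : ℕ ≃ (Fin d → ℤ)) (f : (Fin d → ℝ) → ℝ) (y : Fin d → ℝ) :
    gConstr e f y =
    (if ({ℓ' : ℕ | 1 < ∑ j ∈ Finset.range (ℓ' + 1),
          f ((fun i => Int.fract (y i)) + latticeCoe (e j))}).Nonempty then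
      if (e.symm fun i => ⌊y i⌋) < ell0 e f (fun i => Int.fract (y i)) then f y
      else if (e.symm fun i => ⌊y i⌋) = ell0 e f (fun i => Int.fract (y i)) then
        1 - ∑ j ∈ Finset.range (ell0 e f (fun i => Int.fract (y i))),
          f ((fun i => Int.fract (y i)) + latticeCoe (e j))
      else 0
    else
      if (e.symm fun i => ⌊y i⌋) = 0 then
        f y + 1 - ∑' ℓ' : ℕ, f ((fun i => Int.fract (y i)) + latticeCoe (e ℓ'))
      else f y) := rfl

theorem stmt12 {d : ℕ} (e : ℕ ≃ (Fin d → ℤ)) (he0 : e 0 = 0)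
    (f : (Fin d → ℝ) → ℝ) (hf : Measurable f) (hf0 : ∀ x, 0 ≤ f x)
    (hfint : ∫ x, f x = 1) :
    (∀ y, 0 ≤ gConstr e f y) ∧
    (∀ x : Fin d → ℝ, (∀ i, x i ∈ Set.Ico (0 : ℝ) 1) →
      HasSum (fun k : Fin d → ℤ => gConstr e f (x + latticeCoe k)) 1) ∧
    (∀ y : Fin d → ℝ, ¬ (∀ i, y i ∈ Set.Ico (0 : ℝ) 1) → gConstr e f y ≤ f y) := by
  refine ⟨?_, ?_, ?_⟩
  · -- nonnegativity
    intro y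
    rw [gConstr_def]
    set x' : Fin d → ℝ := fun i => Int.fract (y i) with hx'
    split_ifs with h1 h2 h3
    · exact hf0 y
    · linarith [sum_range_ell0_le e f x']
    · exact le_refl 0
    · have hb : ∀ n, ∑ j ∈ Finset.range n, f (x' + latticeCoe (e j)) ≤ 1 := by
        intro n
        cases n with
        | zero => simp
        | succ m =>
          by_contra hc
          exact h1 ⟨m, not_le.mp hc⟩
      have hts : (∑' ℓ' : ℕ, f (x' + latticeCoe (e ℓ'))) ≤ 1 :=
        Summable.tsum_le_of_sum_range_le (summable_of_sum_range_le (fun n => hf0 _) hb) hb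
      linarith [hf0 y]
    · exact hf0 y
  · -- the periodization sums to 1
    intro x hx
    have hxf : ∀ k : Fin d → ℤ, (fun i => Int.fract ((x + latticeCoe k) i)) = x := by
      intro k
      funext i
      show Int.fract (x i + ((k i : ℤ) : ℝ)) = x i
      rw [Int.fract_add_intCast]
      exact Int.fract_eq_self.mpr ⟨(hx i).1, (hx i).2⟩
    have hfl : ∀ k : Fin d → ℤ, (fun i => ⌊(x + latticeCoe k) i⌋) = k := by
      intro k
      funext i
      show ⌊x i + ((k i : ℤ) : ℝ)⌋ = k i
      rw [Int.floor_add_intCast, Int.floor_eq_zero_iff.mpr (hx i), zero_add]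
    set S : Set ℕ :=
      {ℓ' : ℕ | 1 < ∑ j ∈ Finset.range (ℓ' + 1), f (x + latticeCoe (e j))} with hS
    set L : ℕ := ell0 e f x with hL
    set V : ℕ → ℝ := fun ℓ =>
      if S.Nonempty then
        if ℓ < L then f (x + latticeCoe (e ℓ))
        else if ℓ = L then 1 - ∑ j ∈ Finset.range L, f (x + latticeCoe (e j))
        else 0
      else
        if ℓ = 0 then f (x + latticeCoe (e ℓ)) + 1 - ∑' ℓ' : ℕ, f (x + latticeCoe (e ℓ'))
        else f (x + latticeCoe (e ℓ)) with hV
    have hg : ∀ k : Fin d → ℤ, gConstr e f (x + latticeCoe k) = V (e.symm k) := by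
      intro k
      rw [gConstr_def, hxf, hfl, hV]
      simp only [Equiv.apply_symm_apply]
      rfl
    have hVsum : HasSum V 1 := by
      by_cases hne : S.Nonempty
      · have hmem : L ∈ S := Nat.sInf_mem hne
        have hzero : ∀ ℓ ∉ Finset.range (L + 1), V ℓ = 0 := by
          intro ℓ hℓ
          rw [Finset.mem_range] at hℓ
          simp only [hV, if_pos hne]
          rw [if_neg (by omega), if_neg (by omega)]
        have hsum : ∑ ℓ ∈ Finset.range (L + 1), V ℓ = 1 := by
          rw [Finset.sum_range_succ]
          have h1 : ∀ ℓ ∈ Finset.range L, V ℓ = f (x + latticeCoe (e ℓ)) := by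
            intro ℓ hℓ
            rw [Finset.mem_range] at hℓ
            simp only [hV, if_pos hne, if_pos hℓ]
          rw [Finset.sum_congr rfl h1]
          have h2 : V L = 1 - ∑ j ∈ Finset.range L, f (x + latticeCoe (e j)) := by
            simp only [hV, if_pos hne, lt_irrefl, if_false]
            simp
          rw [h2]
          ring
        have : HasSum V (∑ ℓ ∈ Finset.range (L + 1), V ℓ) := hasSum_sum_of_ne_finset_zero hzero
        rwa [hsum] at this
      · have hb : ∀ n, ∑ j ∈ Finset.range n, f (x + latticeCoe (e j)) ≤ 1 := by
          intro n
          cases n with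
          | zero => simp
          | succ m =>
            by_contra hc
            exact hne ⟨m, not_le.mp hc⟩
        have hsummable : Summable (fun ℓ : ℕ => f (x + latticeCoe (e ℓ))) :=
          summable_of_sum_range_le (fun n => hf0 _) hb
        set T : ℝ := ∑' ℓ' : ℕ, f (x + latticeCoe (e ℓ')) with hT
        have hS1 : HasSum (fun ℓ : ℕ => f (x + latticeCoe (e ℓ))) T := hsummable.hasSum
        have hS2 : HasSum (fun ℓ : ℕ => if ℓ = 0 then 1 - T else 0) (1 - T) :=
          hasSum_ite_eq 0 (1 - T)
        have hadd := hS1.add hS2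
        have hfun : V = fun ℓ : ℕ =>
            f (x + latticeCoe (e ℓ)) + if ℓ = 0 then 1 - T else 0 := by
          funext ℓ
          simp only [hV, if_neg hne]
          by_cases hℓ : ℓ = 0
          · rw [if_pos hℓ, if_pos hℓ]; ring
          · rw [if_neg hℓ, if_neg hℓ]; ring
        rw [hfun]
        convert hadd using 1
        ring
    have hcomp : (fun k : Fin d → ℤ => gConstr e f (x + latticeCoe k)) = V ∘ e.symm :=
      funext hg
    rw [hcomp]
    exact (Equiv.hasSum_iff e.symm).mpr hVsum
  · -- domination outside the unit cube
    intro y hy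
    push_neg at hy
    obtain ⟨i, hi⟩ := hy
    have hfl0 : (fun i => ⌊y i⌋) ≠ (0 : Fin d → ℤ) := by
      intro hc
      exact hi (Int.floor_eq_zero_iff.mp (congrFun hc i))
    have hℓ0 : (e.symm fun i => ⌊y i⌋) ≠ 0 := by
      intro hc
      apply hfl0
      have := congrArg e hc
      rwa [Equiv.apply_symm_apply, he0] at this
    rw [gConstr_def]
    set x' : Fin d → ℝ := fun i => Int.fract (y i) with hx'
    split_ifs with h1 h2 h3
    · exact le_refl (f y)
    · -- ℓ = ell0 : 1 - partial sum ≤ f y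
      have hmem : ell0 e f x' ∈
          {ℓ' : ℕ | 1 < ∑ j ∈ Finset.range (ℓ' + 1), f (x' + latticeCoe (e j))} :=
        Nat.sInf_mem h1
      have hmem' : 1 < ∑ j ∈ Finset.range (ell0 e f x' + 1), f (x' + latticeCoe (e j)) := hmem
      rw [Finset.sum_range_succ] at hmem'
      have hy_eq : y = x' + latticeCoe (e (ell0 e f x')) := by
        rw [← h3, Equiv.apply_symm_apply]
        funext j
        show y j = Int.fract (y j) + ((⌊y j⌋ : ℤ) : ℝ)
        rw [Int.fract]
        ring
      rw [hy_eq]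
      linarith
    · exact hf0 y
    · exact le_refl (f y)
end
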